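/- Let K be a field, d ≥ 1, λ ∈ K. Define the linear maps ι₁, ι₂, ι₃ : K^d → K^d × K^d by ι₁(x) = (x,0), ι₂(x) = (0,x), ι₃(x) = (x,x), and π : K^d × K^d → K^d by π(x,y) = x + J_d(λ)y. Suppose K-linear maps f₀ : K^d × K^d → K^d × K^d and f₁, f₂, f₃, f₄ : K^d → K^d satisfy f₀ ∘ ι₁ = ι₁ ∘ f₁, f₀ ∘ ι₂ = ι₂ ∘ f₂, f₀ ∘ ι₃ = ι₃ ∘ f₃, and f₄ ∘ π = π ∘ f₀. Then there is a single d×d matrix A over K commuting with J_d(λ) such that f₁ = f₂ = f₃ = f₄ = A (as matrices) and f₀(x,y) = (Ax, Ay) for all x, y. In particular, if f₀, …, f₄ are all idempotent, then they are all zero or all the identity. -/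
import Mathlib


noncomputable section

variable (K : Type) [Field K]

/-- The `d × d` Jordan block `J_d(λ)`: `λ` on the diagonal, `1` on the superdiagonal,
`0` elsewhere. -/
def Jmat (d : ℕ) (lam : K) : Matrix (Fin d) (Fin d) K :=
  Matrix.of fun i j => if i = j then lam else if (j : ℕ) = (i : ℕ) + 1 then 1 else 0

/-- `ι₁ : K^d → K^d × K^d`, `x ↦ (x, 0)`. -/
def iota1 (d : ℕ) : (Fin d → K) →ₗ[K] (Fin d → K) × (Fin d → K) :=
  LinearMap.prod LinearMap.id 0

/-- `ι₂ : K^d → K^d × K^d`, `x ↦ (0, x)`. -/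
def iota2 (d : ℕ) : (Fin d → K) →ₗ[K] (Fin d → K) × (Fin d → K) :=
  LinearMap.prod 0 LinearMap.id

/-- `ι₃ : K^d → K^d × K^d`, `x ↦ (x, x)`. -/
def iota3 (d : ℕ) : (Fin d → K) →ₗ[K] (Fin d → K) × (Fin d → K) :=
  LinearMap.prod LinearMap.id LinearMap.id

/-- `π : K^d × K^d → K^d`, `(x, y) ↦ x + J_d(λ) y`. -/
def piMap (d : ℕ) (lam : K) : ((Fin d → K) × (Fin d → K)) →ₗ[K] (Fin d → K) :=
  LinearMap.fst K (Fin d → K) (Fin d → K) +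
    (Jmat K d lam).mulVecLin.comp (LinearMap.snd K (Fin d → K) (Fin d → K))

lemma mulVecLin_inj {K : Type} [Field K] {d : ℕ} {A B : Matrix (Fin d) (Fin d) K}
    (h : A.mulVecLin = B.mulVecLin) : A = B := by
  rw [← Matrix.toLin'_apply', ← Matrix.toLin'_apply'] at h
  exact Matrix.toLin'.injective h

lemma Jmat_split {K : Type} [Field K] (d : ℕ) (lam : K) :
    Jmat K d lam = lam • (1 : Matrix (Fin d) (Fin d) K) + Jmat K d 0 := by
  ext i j
  simp only [Jmat, Matrix.of_apply, Matrix.add_apply, Matrix.smul_apply, Matrix.one_apply]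
  by_cases h : i = j <;> simp [h]

lemma Jpow_apply {K : Type} [Field K] (d : ℕ) (m : ℕ) (i j : Fin d) :
    ((Jmat K d 0) ^ m) i j = if (j : ℕ) = (i : ℕ) + m then 1 else 0 := by
  induction m generalizing i j with
  | zero => simp [Matrix.one_apply, Fin.ext_iff, eq_comm]
  | succ m ih =>
    rw [pow_succ, Matrix.mul_apply]
    by_cases h : (j : ℕ) = (i : ℕ) + (m + 1)
    · have hk : ((i : ℕ) + m) < d := by omega
      rw [Finset.sum_eq_single (⟨(i : ℕ) + m, hk⟩ : Fin d)]
      · rw [ih, if_pos rfl, one_mul, if_pos h, Jmat]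
        simp only [Matrix.of_apply]
        rw [if_neg (by simp [Fin.ext_iff]; omega), if_pos (by omega)]
      · intro k _ hk'
        rw [ih]
        by_cases h1 : (k : ℕ) = (i : ℕ) + m
        · exact absurd (Fin.ext h1) hk'
        · rw [if_neg h1, zero_mul]
      · simp
    · rw [if_neg h]
      apply Finset.sum_eq_zero
      intro k _
      rw [ih]
      by_cases h1 : (k : ℕ) = (i : ℕ) + m
      · rw [if_pos h1, one_mul, Jmat]
        simp only [Matrix.of_apply]
        split_ifs with ha hb
        · rfl
        · omega
        · rfl
      · rw [if_neg h1, zero_mul]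

lemma Jpow_d {K : Type} [Field K] (d : ℕ) : (Jmat K d 0) ^ d = 0 := by
  ext i j
  rw [Jpow_apply]
  have := j.isLt
  simp only [Matrix.zero_apply]
  rw [if_neg (by omega)]

lemma comm_rel {K : Type} [Field K] {d : ℕ} {A : Matrix (Fin d) (Fin d) K}
    (hcomm : A * Jmat K d 0 = Jmat K d 0 * A) (i j : Fin d) :
    (if h : 1 ≤ (j:ℕ) then A i ⟨(j:ℕ)-1, by omega⟩ else 0)
      = (if h : (i:ℕ)+1 < d then A ⟨(i:ℕ)+1, h⟩ j else 0) := by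
  have H := congrFun (congrFun hcomm i) j
  rw [Matrix.mul_apply, Matrix.mul_apply] at H
  have hjd := j.isLt
  have hL : ∑ k, A i k * Jmat K d 0 k j
      = (if h : 1 ≤ (j:ℕ) then A i ⟨(j:ℕ)-1, by omega⟩ else 0) := by
    by_cases h : 1 ≤ (j:ℕ)
    · rw [dif_pos h, Finset.sum_eq_single (⟨(j:ℕ)-1, by omega⟩ : Fin d)]
      · rw [Jmat]; simp only [Matrix.of_apply]
        rw [if_neg (Fin.ne_of_val_ne (show (j:ℕ)-1 ≠ (j:ℕ) by omega)),
          if_pos (show (j:ℕ) = ((j:ℕ)-1)+1 by omega), mul_one]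
      · intro k _ hk
        rw [Jmat]; simp only [Matrix.of_apply]
        split_ifs with h1 h2
        · exact mul_zero _
        · exact absurd (Fin.ext (show (k:ℕ) = (j:ℕ)-1 by omega)) hk
        · exact mul_zero _
      · simp
    · rw [dif_neg h]
      apply Finset.sum_eq_zero; intro k _
      rw [Jmat]; simp only [Matrix.of_apply]
      split_ifs with h1 h2
      · exact mul_zero _
      · omega
      · exact mul_zero _
  have hR : ∑ k, Jmat K d 0 i k * A k j
      = (if h : (i:ℕ)+1 < d then A ⟨(i:ℕ)+1, h⟩ j else 0) := by
    by_cases h : (i:ℕ)+1 < d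
    · rw [dif_pos h, Finset.sum_eq_single (⟨(i:ℕ)+1, h⟩ : Fin d)]
      · rw [Jmat]; simp only [Matrix.of_apply]
        rw [if_neg (Fin.ne_of_val_ne (show (i:ℕ) ≠ (i:ℕ)+1 by omega)), ]
        simp
      · intro k _ hk
        rw [Jmat]; simp only [Matrix.of_apply]
        split_ifs with h1 h2
        · exact zero_mul _
        · exact absurd (Fin.ext h2) hk
        · exact zero_mul _
      · simp
    · rw [dif_neg h]
      apply Finset.sum_eq_zero; intro k _
      have hkd := k.isLt
      rw [Jmat]; simp only [Matrix.of_apply]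
      split_ifs with h1 h2
      · exact zero_mul _
      · omega
      · exact zero_mul _
  rw [hL, hR] at H
  exact H

lemma comm_rel' {K : Type} [Field K] {d : ℕ} {A : Matrix (Fin d) (Fin d) K}
    (hcomm : A * Jmat K d 0 = Jmat K d 0 * A) (n : ℕ) (hn : n + 1 < d) (j : Fin d) :
    A ⟨n+1, hn⟩ j
      = if h : 1 ≤ (j:ℕ) then A ⟨n, by omega⟩ ⟨(j:ℕ)-1, by omega⟩ else 0 := by
  have h := comm_rel hcomm ⟨n, by omega⟩ j
  rw [dif_pos (show ((⟨n, by omega⟩ : Fin d) : ℕ) + 1 < d from hn)] at h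
  exact h.symm

lemma toeplitz {K : Type} [Field K] {d : ℕ} (hd : 0 < d) {A : Matrix (Fin d) (Fin d) K}
    (hcomm : A * Jmat K d 0 = Jmat K d 0 * A) :
    ∀ (n : ℕ) (hn : n < d) (j : Fin d),
      A ⟨n, hn⟩ j = if h : n ≤ (j:ℕ) then A ⟨0, hd⟩ ⟨(j:ℕ) - n, by omega⟩ else 0 := by
  intro n
  induction n with
  | zero =>
    intro hn j
    rw [dif_pos (Nat.zero_le _)]
    rfl
  | succ n ih =>
    intro hn j
    have hjd := j.isLt
    rw [comm_rel' hcomm n hn j]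
    by_cases hj : 1 ≤ (j:ℕ)
    · rw [dif_pos hj, ih (by omega) ⟨(j:ℕ)-1, by omega⟩]
      by_cases h2 : n + 1 ≤ (j:ℕ)
      · rw [dif_pos (show n ≤ (j:ℕ)-1 by omega), dif_pos h2]
        congr 1
        exact Fin.ext (show (j:ℕ)-1-n = (j:ℕ)-(n+1) by omega)
      · rw [dif_neg (show ¬ n ≤ (j:ℕ)-1 by omega), dif_neg (by omega)]
    · rw [dif_neg hj, dif_neg (by omega)]

lemma commutant_eq_sum {K : Type} [Field K] {d : ℕ} (hd : 0 < d) {A : Matrix (Fin d) (Fin d) K}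
    (hcomm : A * Jmat K d 0 = Jmat K d 0 * A) :
    A = ∑ m : Fin d, A ⟨0, hd⟩ m • (Jmat K d 0) ^ (m : ℕ) := by
  ext i j
  have hjd := j.isLt
  have hid := i.isLt
  rw [Matrix.sum_apply]
  simp only [Matrix.smul_apply, Jpow_apply, smul_eq_mul]
  by_cases h : (i : ℕ) ≤ (j : ℕ)
  · rw [Finset.sum_eq_single (⟨(j:ℕ) - (i:ℕ), by omega⟩ : Fin d)]
    · rw [if_pos (show (j:ℕ) = (i:ℕ) + ((j:ℕ)-(i:ℕ)) by omega), mul_one]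
      have := toeplitz hd hcomm (i:ℕ) hid j
      rw [dif_pos h] at this
      exact this
    · intro m _ hm
      rw [if_neg, mul_zero]
      intro hc
      exact hm (Fin.ext (show (m:ℕ) = (j:ℕ)-(i:ℕ) by omega))
    · simp
  · rw [Finset.sum_eq_zero]
    · have := toeplitz hd hcomm (i:ℕ) hid j
      rw [dif_neg h] at this
      exact this
    · intro m _
      rw [if_neg (by omega), mul_zero]

lemma nilpart {K : Type} [Field K] {d : ℕ} (hd : 0 < d) {A : Matrix (Fin d) (Fin d) K}
    (hcomm : A * Jmat K d 0 = Jmat K d 0 * A) :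
    (A - A ⟨0, hd⟩ ⟨0, hd⟩ • 1) ^ d = 0 := by
  set N := Jmat K d 0 with hN
  set c : Fin d → K := fun m => A ⟨0, hd⟩ m with hc
  have hA := commutant_eq_sum hd hcomm
  set C : Matrix (Fin d) (Fin d) K :=
    ∑ m ∈ Finset.univ.erase (⟨0, hd⟩ : Fin d), c m • N ^ ((m:ℕ) - 1) with hC
  have hB : A - c ⟨0, hd⟩ • 1 = N * C := by
    rw [hA, ← Finset.add_sum_erase _ _ (Finset.mem_univ (⟨0, hd⟩ : Fin d))]
    simp only [Fin.val_mk, pow_zero]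
    rw [add_sub_cancel_left, hC, Finset.mul_sum]
    apply Finset.sum_congr rfl
    intro m hm
    have hm0 : (m:ℕ) ≠ 0 := by
      intro h
      exact (Finset.mem_erase.mp hm).1 (Fin.ext h)
    rw [Matrix.mul_smul]
    congr 1
    rw [← pow_succ']
    congr 1
    omega
  have hNC : Commute N C := by
    rw [hC]
    apply Commute.sum_right
    intro m _
    apply Commute.smul_right
    exact (Commute.pow_right (Commute.refl N) _)
  rw [hB, hNC.mul_pow, Jpow_d, zero_mul]

lemma idem_commute_jordan {K : Type} [Field K] {d : ℕ} (hd : 0 < d) (lam : K) {A : Matrix (Fin d) (Fin d) K}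
    (hcomm : A * Jmat K d lam = Jmat K d lam * A) (hidem : A * A = A) :
    A = 0 ∨ A = 1 := by
  have hcomm0 : A * Jmat K d 0 = Jmat K d 0 * A := by
    rw [Jmat_split d lam] at hcomm
    rw [mul_add, add_mul, Matrix.mul_smul, Matrix.smul_mul, mul_one, one_mul] at hcomm
    exact add_left_cancel hcomm
  set c0 := A ⟨0, hd⟩ ⟨0, hd⟩ with hc0def
  have hc0 : c0 * c0 = c0 := by
    have h := congrFun (congrFun hidem ⟨0, hd⟩) ⟨0, hd⟩
    rw [Matrix.mul_apply, Finset.sum_eq_single (⟨0, hd⟩ : Fin d)] at h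
    · exact h
    · intro k _ hk
      have hk0 : (0:ℕ) < (k:ℕ) := by
        rcases Nat.eq_zero_or_pos (k:ℕ) with h' | h'
        · exact absurd (Fin.ext h') hk
        · exact h'
      have ht := toeplitz hd hcomm0 (k:ℕ) k.isLt ⟨0, hd⟩
      simp only [show ((⟨0, hd⟩ : Fin d):ℕ) = 0 from rfl] at ht
      rw [dif_neg (by omega)] at ht
      rw [show A k ⟨0, hd⟩ = 0 from ht, mul_zero]
    · simp
  have hd1 : d - 1 + 1 = d := by omega
  have hpow : A ^ d = A := by
    have h2 := (show IsIdempotentElem A from hidem).pow_succ_eq (d - 1)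
    rwa [hd1] at h2
  have h01 : c0 = 0 ∨ c0 = 1 := by
    rcases mul_eq_zero.mp (show c0 * (c0 - 1) = 0 by
      rw [mul_sub, hc0, mul_one, sub_self]) with h | h
    · exact Or.inl h
    · exact Or.inr (sub_eq_zero.mp h)
  have hnil := nilpart hd hcomm0
  rcases h01 with h | h
  · left
    rw [← hpow]
    calc A ^ d = (A - c0 • 1) ^ d := by rw [h, zero_smul, sub_zero]
    _ = 0 := hnil
  · right
    have hDidem : (1 - A) * (1 - A) = 1 - A := by
      have e : (1 - A) * (1 - A) = 1 - A - A + A * A := by noncomm_ring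
      rw [e, hidem]
      abel
    have hDpow : (1 - A) ^ d = 1 - A := by
      have h2 := (show IsIdempotentElem (1 - A) from hDidem).pow_succ_eq (d - 1)
      rwa [hd1] at h2
    have hDnil : (1 - A) ^ d = 0 := by
      have : (1 - A) = -(A - c0 • 1) := by rw [h, one_smul]; abel
      rw [this, neg_pow, hnil, mul_zero]
    have hsub : (1 : Matrix (Fin d) (Fin d) K) - A = 0 := by rw [← hDpow, hDnil]
    exact (sub_eq_zero.mp hsub).symm


/-- Endomorphisms of the `3`-in-`1`-out `D̃₄`-representation with central space
`K^d × K^d`, inbound arrows `ι₁, ι₂, ι₃` and outbound arrow `π`: if linear maps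
`f₀ : K^d × K^d → K^d × K^d` and `f₁, f₂, f₃, f₄ : K^d → K^d` intertwine the four arrows,
then there is a single `d × d` matrix `A` commuting with `J_d(λ)` with
`f₁ = f₂ = f₃ = f₄ = A` and `f₀ = A ⊕ A`; in particular if all the `fᵢ` are idempotent,
they are all zero or all the identity. -/
theorem dtildefour_endomorphism (K : Type) [Field K] (d : ℕ) (hd : 1 ≤ d) (lam : K)
    (f₀ : ((Fin d → K) × (Fin d → K)) →ₗ[K] ((Fin d → K) × (Fin d → K)))
    (f₁ f₂ f₃ f₄ : (Fin d → K) →ₗ[K] (Fin d → K))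
    (h₁ : f₀.comp (iota1 K d) = (iota1 K d).comp f₁)
    (h₂ : f₀.comp (iota2 K d) = (iota2 K d).comp f₂)
    (h₃ : f₀.comp (iota3 K d) = (iota3 K d).comp f₃)
    (h₄ : f₄.comp (piMap K d lam) = (piMap K d lam).comp f₀) :
    (∃ A : Matrix (Fin d) (Fin d) K,
      A * Jmat K d lam = Jmat K d lam * A ∧
      f₁ = A.mulVecLin ∧ f₂ = A.mulVecLin ∧ f₃ = A.mulVecLin ∧ f₄ = A.mulVecLin ∧
      ∀ x y : Fin d → K, f₀ (x, y) = (A.mulVec x, A.mulVec y)) ∧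
    ((f₀.comp f₀ = f₀ ∧ f₁.comp f₁ = f₁ ∧ f₂.comp f₂ = f₂ ∧ f₃.comp f₃ = f₃ ∧
        f₄.comp f₄ = f₄) →
      (f₀ = 0 ∧ f₁ = 0 ∧ f₂ = 0 ∧ f₃ = 0 ∧ f₄ = 0) ∨
      (f₀ = LinearMap.id ∧ f₁ = LinearMap.id ∧ f₂ = LinearMap.id ∧ f₃ = LinearMap.id ∧
        f₄ = LinearMap.id)) := by

  classical
  have hd0 : 0 < d := hd
  have e1 : ∀ x, f₀ (x, 0) = (f₁ x, 0) := by
    intro x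
    simpa [iota1] using LinearMap.congr_fun h₁ x
  have e2 : ∀ y, f₀ (0, y) = (0, f₂ y) := by
    intro y
    simpa [iota2] using LinearMap.congr_fun h₂ y
  have e3 : ∀ x, f₀ (x, x) = (f₃ x, f₃ x) := by
    intro x
    simpa [iota3] using LinearMap.congr_fun h₃ x
  have hf0 : ∀ x y, f₀ (x, y) = (f₁ x, f₂ y) := by
    intro x y
    have hxy : ((x, y) : (Fin d → K) × (Fin d → K)) = (x, 0) + (0, y) := by simp
    rw [hxy, map_add, e1 x, e2 y]
    simp
  have h13 : f₁ = f₃ := by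
    refine LinearMap.ext fun x => ?_
    have h := e3 x
    rw [hf0 x x] at h
    exact congrArg Prod.fst h
  have h23 : f₂ = f₃ := by
    refine LinearMap.ext fun x => ?_
    have h := e3 x
    rw [hf0 x x] at h
    exact congrArg Prod.snd h
  have h21 : f₂ = f₁ := h23.trans h13.symm
  have e4 : ∀ x y, f₄ (x + (Jmat K d lam).mulVec y)
      = f₁ x + (Jmat K d lam).mulVec (f₂ y) := by
    intro x y
    have h := LinearMap.congr_fun h₄ (x, y)
    rw [LinearMap.comp_apply, LinearMap.comp_apply, hf0] at h
    simpa [piMap] using h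
  have hf41 : f₄ = f₁ := by
    refine LinearMap.ext fun x => ?_
    simpa using e4 x 0
  have hcommL : ∀ y, f₁ ((Jmat K d lam).mulVec y) = (Jmat K d lam).mulVec (f₁ y) := by
    intro y
    have h := e4 0 y
    rw [hf41, h21] at h
    simpa using h
  set A := LinearMap.toMatrix' f₁ with hAdef
  have hA : f₁ = A.mulVecLin := by
    rw [← Matrix.toLin'_apply', hAdef, Matrix.toLin'_toMatrix']
  have hAJ : A * Jmat K d lam = Jmat K d lam * A := by
    apply mulVecLin_inj
    rw [Matrix.mulVecLin_mul, Matrix.mulVecLin_mul, ← hA]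
    apply LinearMap.ext
    intro y
    simpa [Matrix.mulVecLin_apply] using hcommL y
  refine ⟨⟨A, hAJ, hA, h21.symm ▸ hA, by rw [← h13]; exact hA, hf41.trans hA, ?_⟩, ?_⟩
  · intro x y
    rw [hf0, h21, hA]
    simp [Matrix.mulVecLin_apply]
  · rintro ⟨hi0, hi1, hi2, hi3, hi4⟩
    have hAA : A * A = A := by
      apply mulVecLin_inj
      rw [Matrix.mulVecLin_mul, ← hA]
      exact hi1
    rcases idem_commute_jordan hd0 lam hAJ hAA with h | h
    · left
      have hf1 : f₁ = 0 := by rw [hA, h, Matrix.mulVecLin_zero]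
      refine ⟨?_, hf1, h21.trans hf1, h13.symm.trans hf1, hf41.trans hf1⟩
      apply LinearMap.ext
      rintro ⟨x, y⟩
      rw [hf0, hf1, h21.trans hf1]
      simp
    · right
      have hf1 : f₁ = LinearMap.id := by rw [hA, h, Matrix.mulVecLin_one]
      refine ⟨?_, hf1, h21.trans hf1, h13.symm.trans hf1, hf41.trans hf1⟩
      apply LinearMap.ext
      rintro ⟨x, y⟩
      rw [hf0, hf1, h21.trans hf1]
      simp


end
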